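/- arXiv:2308.07385 — 2 statements merged into one kernel-verified Lean document; each statement's English description precedes it below -/
import Mathlib

section
/- Let H be a real Hilbert space and A : H → H a radially continuous one-sided contraction with constant m < 1 (i.e., ⟨A(u) − A(w), u − w⟩ ≤ m‖u − w‖²). Then I − A : H → H is a bijection with a continuous inverse. -/
/-!
`I - A` is strongly monotone with constant `1 - m` and radially continuous, which makes it
injective with a `(1 - m)⁻¹`-Lipschitz inverse on its range. Surjectivity is the Browder–Minty
theorem, proved without Brouwer's fixed point theorem: in finite dimension by induction on
the dimension, solving along one direction with the intermediate value theorem; in `H` through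
Galerkin approximations, with weak compactness replaced by the minimal-norm points of a decreasing
family of closed convex sets.
-/

open scoped RealInnerProductSpace

open Filter Function Set Topology

section Operators

variable {E : Type*} [NormedAddCommGroup E] [InnerProductSpace ℝ E]

def IsMonotoneOp (S : E → E) : Prop :=
  ∀ u w, 0 ≤ ⟪S u - S w, u - w⟫

def IsStronglyMonotoneOp (c : ℝ) (S : E → E) : Prop :=
  ∀ u w, c * ‖u - w‖ ^ 2 ≤ ⟪S u - S w, u - w⟫

def IsRadiallyContinuous (S : E → E) : Prop :=
  ∀ u v, ContinuousOn (fun t : ℝ => ⟪S (u + t • v), v⟫) (Icc 0 1)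

variable {S : E → E} {c : ℝ}

lemma mul_norm_le_norm_of_mul_sq_le_inner {x y : E} (h : c * ‖x‖ ^ 2 ≤ ⟪y, x⟫) :
    c * ‖x‖ ≤ ‖y‖ := by
  rcases (norm_nonneg x).eq_or_lt with hx | hx
  · rw [← hx, mul_zero]
    exact norm_nonneg y
  · refine le_of_mul_le_mul_right ?_ hx
    calc c * ‖x‖ * ‖x‖ = c * ‖x‖ ^ 2 := by ring
      _ ≤ ‖y‖ * ‖x‖ := h.trans (real_inner_le_norm y x)

namespace IsStronglyMonotoneOp

lemma isMonotoneOp (hS : IsStronglyMonotoneOp c S) (hc : 0 ≤ c) : IsMonotoneOp S :=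
  fun u w => (by positivity : 0 ≤ c * ‖u - w‖ ^ 2).trans (hS u w)

lemma antilipschitzWith (hS : IsStronglyMonotoneOp c S) (hc : 0 < c) :
    AntilipschitzWith (Real.toNNReal c)⁻¹ S := by
  refine AntilipschitzWith.of_le_mul_dist fun u w => ?_
  rw [NNReal.coe_inv, Real.coe_toNNReal c hc.le, dist_eq_norm, dist_eq_norm,
    ← div_eq_inv_mul, le_div_iff₀' hc]
  exact mul_norm_le_norm_of_mul_sq_le_inner (hS u w)

lemma mul_norm_le_of_inner_eq_zero (hS : IsStronglyMonotoneOp c S) {u f : E}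
    (h : ⟪S u - f, u⟫ = 0) : c * ‖u‖ ≤ ‖f - S 0‖ := by
  refine mul_norm_le_norm_of_mul_sq_le_inner ?_
  have hu := hS u 0
  rw [sub_zero] at hu
  calc c * ‖u‖ ^ 2 ≤ ⟪S u - S 0, u⟫ := hu
    _ = ⟪f - S 0, u⟫ + ⟪S u - f, u⟫ := by rw [← inner_add_left, sub_add_sub_cancel']
    _ = ⟪f - S 0, u⟫ := by rw [h, add_zero]

lemma mul_sub_le_inner_sub (hS : IsStronglyMonotoneOp c S) {e : E} (he : ‖e‖ = 1) (u : E)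
    {s t : ℝ} (hst : s ≤ t) :
    c * (t - s) ≤ ⟪S (u + t • e), e⟫ - ⟪S (u + s • e), e⟫ := by
  rcases hst.eq_or_lt with rfl | hst
  · simp
  have h := hS (u + t • e) (u + s • e)
  rw [add_sub_add_left_eq_sub, ← sub_smul, norm_smul, he, mul_one, Real.norm_eq_abs, sq_abs,
    inner_smul_right, inner_sub_left] at h
  exact le_of_mul_le_mul_left (by linarith) (sub_pos.2 hst)

end IsStronglyMonotoneOp

lemma IsRadiallyContinuous.eq_of_forall_inner_nonneg (hS : IsRadiallyContinuous S) {u b : E}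
    (h : ∀ w, 0 ≤ ⟪S w - b, w - u⟫) : S u = b := by
  have hdir : ∀ v, ⟪b, v⟫ ≤ ⟪S u, v⟫ := by
    intro v
    have hlim : Tendsto (fun t : ℝ => ⟪S (u + t • v), v⟫) (𝓝[>] 0) (𝓝 ⟪S u, v⟫) := by
      have := ((hS u v) 0 ⟨le_rfl, zero_le_one⟩).mono_of_mem_nhdsWithin
        (mem_of_superset (Ioc_mem_nhdsGT zero_lt_one) Ioc_subset_Icc_self)
      simpa using this.tendsto
    refine ge_of_tendsto hlim ?_
    filter_upwards [self_mem_nhdsWithin] with t (ht : 0 < t)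
    have := h (u + t • v)
    rw [add_sub_cancel_left, inner_smul_right, inner_sub_left] at this
    nlinarith
  have := hdir (b - S u)
  rw [← sub_nonneg, ← inner_sub_left, ← neg_sub, inner_neg_left, real_inner_self_eq_norm_sq,
    neg_nonneg, sq_nonpos_iff, norm_eq_zero, sub_eq_zero] at this
  exact this.symm

end Operators

section Real

variable {c : ℝ}

lemma Continuous.surjective_of_mul_sub_le_sub {g : ℝ → ℝ} (hg : Continuous g) (hc : 0 < c)
    (h : ∀ s t, s ≤ t → c * (t - s) ≤ g t - g s) : Surjective g := by
  refine hg.surjective ?_ ?_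
  · refine tendsto_atTop_mono' _ ?_
      (tendsto_atTop_add_const_left _ (g 0) (tendsto_id.const_mul_atTop hc))
    filter_upwards [eventually_ge_atTop 0] with t ht
    dsimp only [id]
    linarith [h 0 t ht]
  · refine tendsto_atBot_mono' _ ?_
      (tendsto_atBot_add_const_left _ (g 0) (tendsto_id.const_mul_atBot hc))
    filter_upwards [eventually_le_atBot 0] with t ht
    dsimp only [id]
    linarith [h t 0 ht]

lemma mul_abs_sub_le_abs_sub {g : ℝ → ℝ} (h : ∀ s t, s ≤ t → c * (t - s) ≤ g t - g s)
    (s t : ℝ) : c * |t - s| ≤ |g t - g s| := by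
  rcases le_total s t with hst | hts
  · rw [abs_of_nonneg (sub_nonneg.2 hst)]
    exact (h s t hst).trans (le_abs_self _)
  · rw [abs_sub_comm, abs_sub_comm (g t), abs_of_nonneg (sub_nonneg.2 hts)]
    exact (h t s hts).trans (le_abs_self _)

lemma continuous_of_apply_eq_of_mul_sub_le_sub {X : Type*} [TopologicalSpace X] {G : X → ℝ → ℝ}
    {τ : X → ℝ} {k : ℝ} (hc : 0 < c) (hG : ∀ x s t, s ≤ t → c * (t - s) ≤ G x t - G x s)
    (hGc : ∀ t, Continuous fun x => G x t) (hτ : ∀ x, G x (τ x) = k) : Continuous τ := by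
  refine continuous_iff_continuousAt.2 fun x₀ => tendsto_iff_dist_tendsto_zero.2 ?_
  have hbound : ∀ x, dist (τ x) (τ x₀) ≤ |G x (τ x₀) - G x₀ (τ x₀)| / c := fun x => by
    rw [Real.dist_eq, le_div_iff₀' hc, hτ x₀, ← hτ x, abs_sub_comm]
    exact mul_abs_sub_le_abs_sub (hG x) _ _
  refine squeeze_zero (fun _ => dist_nonneg) hbound ?_
  simpa using
    (((hGc (τ x₀)).sub (continuous_const (y := G x₀ (τ x₀)))).abs.div_const c).tendsto x₀

end Real

section Continuity

variable {E : Type*} [NormedAddCommGroup E] [InnerProductSpace ℝ E] [ProperSpace E] {S : E → E}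

lemma IsMonotoneOp.not_tendsto_norm_atTop (hS : IsMonotoneOp S) {y : ℕ → E} {u : E}
    (hy : Tendsto y atTop (𝓝 u)) : ¬Tendsto (fun n => ‖S (y n)‖) atTop atTop := by
  intro hT
  set v : ℕ → E := fun n => ‖S (y n)‖⁻¹ • S (y n)
  have hv : ∀ n, v n ∈ Metric.closedBall (0 : E) 1 := fun n => by
    rw [mem_closedBall_zero_iff, norm_smul, norm_inv, norm_norm]
    exact inv_mul_le_one_of_le₀ le_rfl (norm_nonneg _)
  obtain ⟨v₀, -, φ, hφ, hvφ⟩ := (isCompact_closedBall (0 : E) 1).tendsto_subseq hv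
  have hyφ := hy.comp hφ.tendsto_atTop
  have hTφ := hT.comp hφ.tendsto_atTop
  have hv₀ : ‖v₀‖ = 1 := by
    refine tendsto_nhds_unique hvφ.norm (tendsto_const_nhds.congr' ?_)
    filter_upwards [hTφ.eventually_gt_atTop 0] with n hn
    exact (norm_smul_inv_norm (norm_pos_iff.1 hn)).symm
  -- Dividing the monotonicity inequality at `(y n, w)` by `‖S (y n)‖ → ∞` leaves this limit.
  have hdual : ∀ w, 0 ≤ ⟪v₀, u - w⟫ := by
    intro w
    have hlhs : Tendsto (fun n => ‖S (y (φ n))‖⁻¹ * ⟪S w, y (φ n) - w⟫) atTop (𝓝 0) := by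
      simpa using (tendsto_inv_atTop_zero.comp hTφ).mul
        (tendsto_const_nhds.inner (hyφ.sub tendsto_const_nhds))
    refine le_of_tendsto_of_tendsto hlhs (hvφ.inner (hyφ.sub tendsto_const_nhds))
      (Eventually.of_forall fun n => ?_)
    have hmono := hS (y (φ n)) w
    rw [inner_sub_left, sub_nonneg] at hmono
    simp only [comp_apply, v, real_inner_smul_left]
    exact mul_le_mul_of_nonneg_left hmono (inv_nonneg.2 (norm_nonneg _))
  have := hdual (u + v₀)
  rw [sub_add_cancel_left, inner_neg_right, real_inner_self_eq_norm_sq, hv₀] at this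
  norm_num at this

lemma IsMonotoneOp.continuous (hS : IsMonotoneOp S) (hrad : IsRadiallyContinuous S) :
    Continuous S := by
  refine continuous_iff_seqContinuous.2 fun y u hy => tendsto_of_subseq_tendsto fun ψ hψ => ?_
  have hyψ := hy.comp hψ
  obtain ⟨B, hB⟩ : ∃ B, ∃ᶠ n in atTop, ‖S (y (ψ n))‖ ≤ B := by
    by_contra! h
    exact hS.not_tendsto_norm_atTop hyψ (tendsto_atTop.2 fun B => (h B).mono fun _ => le_of_lt)
  obtain ⟨χ, hχ, hχB⟩ := extraction_of_frequently_atTop hB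
  obtain ⟨b, -, σ, hσ, hb⟩ := (isCompact_closedBall (0 : E) B).tendsto_subseq
    fun n => mem_closedBall_zero_iff.2 (hχB n)
  have hy' := hyψ.comp (hχ.tendsto_atTop.comp hσ.tendsto_atTop)
  have hSu : S u = b := hrad.eq_of_forall_inner_nonneg fun w =>
    ge_of_tendsto ((tendsto_const_nhds.sub hb).inner (tendsto_const_nhds.sub hy'))
      (Eventually.of_forall fun n => hS _ _)
  exact ⟨χ ∘ σ, hSu ▸ hb⟩

end Continuity

section Compression

variable {E : Type*} [NormedAddCommGroup E] [InnerProductSpace ℝ E] {S : E → E} {c : ℝ}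
  (K : Submodule ℝ E) [K.HasOrthogonalProjection]

lemma IsStronglyMonotoneOp.orthogonalProjectionOnto_comp (hS : IsStronglyMonotoneOp c S) :
    IsStronglyMonotoneOp c fun x : K => K.orthogonalProjectionOnto (S x) := fun x y => by
  rw [← map_sub, Submodule.inner_orthogonalProjectionOnto_eq_of_mem_right]
  exact hS x y

lemma IsRadiallyContinuous.orthogonalProjectionOnto_comp (hS : IsRadiallyContinuous S) :
    IsRadiallyContinuous fun x : K => K.orthogonalProjectionOnto (S x) := fun x v => by
  simpa only [Submodule.inner_orthogonalProjectionOnto_eq_of_mem_right, Submodule.coe_add,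
    Submodule.coe_smul] using hS x v

end Compression

section FiniteDimensional

universe u

variable {c : ℝ}

lemma IsStronglyMonotoneOp.orthogonalProjectionOnto_comp_add_smul {E : Type*}
    [NormedAddCommGroup E] [InnerProductSpace ℝ E] {S : E → E} (hS : IsStronglyMonotoneOp c S)
    (hc : 0 ≤ c) {e : E} {τ : (ℝ ∙ e)ᗮ → ℝ} {k : ℝ} (hτ : ∀ x, ⟪S (x + τ x • e), e⟫ = k) :
    IsStronglyMonotoneOp c fun x : (ℝ ∙ e)ᗮ =>
      (ℝ ∙ e)ᗮ.orthogonalProjectionOnto (S (x + τ x • e)) := by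
  intro x y
  set a := (x : E) + τ x • e
  set b := (y : E) + τ y • e
  have hxy : ⟪(x - y : E), e⟫ = 0 :=
    Submodule.mem_orthogonal_singleton_iff_inner_left.1 (x - y).2
  have hSe : ⟪S a - S b, e⟫ = 0 := by rw [inner_sub_left, hτ, hτ, sub_self]
  have hab : a - b = (x - y : E) + (τ x - τ y) • e := by
    simp only [a, b, sub_smul]
    abel
  rw [← map_sub, Submodule.inner_orthogonalProjectionOnto_eq_of_mem_right]
  calc c * ‖x - y‖ ^ 2 ≤ c * ‖(x - y : E) + (τ x - τ y) • e‖ ^ 2 := by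
        rw [norm_add_sq_real, inner_smul_right, hxy, mul_zero, mul_zero, add_zero,
          Submodule.coe_norm, Submodule.coe_sub]
        gcongr
        exact le_add_of_nonneg_right (sq_nonneg _)
    _ = c * ‖a - b‖ ^ 2 := by rw [hab]
    _ ≤ ⟪S a - S b, a - b⟫ := hS a b
    _ = ⟪S a - S b, (x - y : E)⟫ := by
        rw [hab, inner_add_right, inner_smul_right, hSe, mul_zero, add_zero]

/-- Induction step on the dimension: fix the component along a unit vector `e` by the
intermediate value theorem on each line `x + ℝ e`, and solve the rest on `(ℝ ∙ e)ᗮ`. -/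
lemma IsStronglyMonotoneOp.surjective_of_surjective_orthogonal {E : Type*}
    [NormedAddCommGroup E] [InnerProductSpace ℝ E] {S : E → E} (hS : IsStronglyMonotoneOp c S)
    (hc : 0 < c) (hcont : Continuous S) {e : E} (he : ‖e‖ = 1)
    (hK : ∀ S' : (ℝ ∙ e)ᗮ → (ℝ ∙ e)ᗮ,
      IsStronglyMonotoneOp c S' → Continuous S' → Surjective S') :
    Surjective S := by
  set K := (ℝ ∙ e)ᗮ
  intro f
  have hline : ∀ x : K, Surjective fun t : ℝ => ⟪S (x + t • e), e⟫ := fun x =>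
    Continuous.surjective_of_mul_sub_le_sub (by fun_prop) hc
      fun _ _ => hS.mul_sub_le_inner_sub he x
  choose τ hτ using fun x : K => hline x ⟪f, e⟫
  simp only at hτ
  have hτc : Continuous τ := continuous_of_apply_eq_of_mul_sub_le_sub hc
    (fun x _ _ => hS.mul_sub_le_inner_sub he x) (fun t => by fun_prop) hτ
  obtain ⟨x, hx⟩ := hK _ (hS.orthogonalProjectionOnto_comp_add_smul hc.le hτ) (by fun_prop)
    (K.orthogonalProjectionOnto f)
  refine ⟨x + τ x • e, sub_eq_zero.1 ?_⟩
  have h₁ : S (x + τ x • e) - f ∈ Kᗮ := by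
    rw [← Submodule.orthogonalProjectionOnto_eq_zero_iff, map_sub, sub_eq_zero]
    exact hx
  have h₂ : S (x + τ x • e) - f ∈ K := by
    rw [Submodule.mem_orthogonal_singleton_iff_inner_left, inner_sub_left, hτ, sub_self]
  simpa using K.inf_orthogonal_eq_bot.le ⟨h₂, h₁⟩

theorem IsStronglyMonotoneOp.surjective_of_finiteDimensional {E : Type u} [NormedAddCommGroup E]
    [InnerProductSpace ℝ E] [FiniteDimensional ℝ E] {S : E → E} (hS : IsStronglyMonotoneOp c S)
    (hc : 0 < c) (hcont : Continuous S) : Surjective S := by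
  suffices ∀ (n : ℕ) (E : Type u) [NormedAddCommGroup E] [InnerProductSpace ℝ E]
      [FiniteDimensional ℝ E], Module.finrank ℝ E = n →
      ∀ S : E → E, IsStronglyMonotoneOp c S → Continuous S → Surjective S from
    this _ E rfl S hS hcont
  intro n
  induction n with
  | zero =>
    intro E _ _ _ hE S _ _ f
    have : Subsingleton E := Module.finrank_zero_iff.1 hE
    exact ⟨f, Subsingleton.elim _ _⟩
  | succ n ih =>
    intro E _ _ _ hE S hS hcont
    have : Nontrivial E := Module.nontrivial_of_finrank_eq_succ hE
    obtain ⟨v, hv⟩ := exists_ne (0 : E)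
    have he : ‖‖v‖⁻¹ • v‖ = 1 := norm_smul_inv_norm hv
    refine hS.surjective_of_surjective_orthogonal hc hcont he fun S' hS' hcont' =>
      ih _ ?_ S' hS' hcont'
    have := (ℝ ∙ (‖v‖⁻¹ • v)).finrank_add_finrank_orthogonal
    rw [finrank_span_singleton (norm_ne_zero_iff.1 (he.trans_ne one_ne_zero)), hE] at this
    omega

end FiniteDimensional

section Hilbert

variable {H : Type*} [NormedAddCommGroup H] [InnerProductSpace ℝ H] {S : H → H} {c : ℝ}

lemma IsStronglyMonotoneOp.exists_mem_sub_mem_orthogonal (hS : IsStronglyMonotoneOp c S)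
    (hc : 0 < c) (hrad : IsRadiallyContinuous S) (F : Submodule ℝ H) [FiniteDimensional ℝ F]
    (f : H) : ∃ u ∈ F, S u - f ∈ Fᗮ := by
  have hSF := hS.orthogonalProjectionOnto_comp F
  obtain ⟨x, hx⟩ := hSF.surjective_of_finiteDimensional hc
    ((hSF.isMonotoneOp hc.le).continuous (hrad.orthogonalProjectionOnto_comp F))
    (F.orthogonalProjectionOnto f)
  refine ⟨x, x.2, ?_⟩
  rw [← Submodule.orthogonalProjectionOnto_eq_zero_iff, map_sub, sub_eq_zero]
  exact hx

lemma IsMonotoneOp.inner_nonneg_of_sub_mem_orthogonal (hS : IsMonotoneOp S)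
    {F : Submodule ℝ H} {u w f : H} (hu : u ∈ F) (hw : w ∈ F) (huf : S u - f ∈ Fᗮ) :
    0 ≤ ⟪S w - f, w - u⟫ := by
  rw [← sub_add_sub_cancel (S w) (S u) f, inner_add_left,
    Submodule.inner_left_of_mem_orthogonal (F.sub_mem hw hu) huf, add_zero]
  exact hS w u

lemma exists_mem_forall_inner_sub_nonneg [CompleteSpace H] {K : Set H} (hne : K.Nonempty)
    (hK : IsClosed K) (hconv : Convex ℝ K) : ∃ q ∈ K, ∀ x ∈ K, 0 ≤ ⟪q, x - q⟫ := by
  obtain ⟨q, hq, hmin⟩ := exists_norm_eq_iInf_of_complete_convex hne hK.isComplete hconv 0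
  refine ⟨q, hq, fun x hx => ?_⟩
  have := (norm_eq_iInf_iff_real_inner_le_zero hconv hq).1 hmin x hx
  rwa [zero_sub, inner_neg_left, neg_nonpos] at this

/-- A substitute for weak compactness: the minimal-norm points of a decreasing family of closed
convex sets have increasing norms and form a Cauchy net, since `‖q j - q i‖ ^ 2 ≤ ‖q j‖ ^ 2 -
‖q i‖ ^ 2` for `i ≤ j`. -/
theorem Antitone.nonempty_iInter_of_isClosed_of_convex [CompleteSpace H] {ι : Type*}
    [SemilatticeSup ι] [Nonempty ι] {D : ι → Set H} (hD : Antitone D)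
    (hclosed : ∀ i, IsClosed (D i)) (hconv : ∀ i, Convex ℝ (D i)) {R : ℝ}
    (hR : ∀ i, ∃ x ∈ D i, ‖x‖ ≤ R) : (⋂ i, D i).Nonempty := by
  choose q hqD hq using fun i =>
    exists_mem_forall_inner_sub_nonneg ((hR i).imp fun _ => And.left) (hclosed i) (hconv i)
  have hsq : ∀ {i j}, i ≤ j → ‖q j - q i‖ ^ 2 ≤ ‖q j‖ ^ 2 - ‖q i‖ ^ 2 := fun {i j} hij => by
    have := hq i (q j) (hD hij (hqD j))
    rw [← add_sub_cancel (q i) (q j), norm_add_sq_real, add_sub_cancel_left]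
    linarith
  have hbdd : ∀ i, ‖q i‖ ^ 2 ≤ R ^ 2 := fun i => by
    obtain ⟨x, hx, hxR⟩ := hR i
    have : 1 * ‖q i‖ ≤ ‖x‖ := mul_norm_le_norm_of_mul_sq_le_inner <| by
      have := hq i x hx
      rw [inner_sub_right, real_inner_self_eq_norm_sq, real_inner_comm] at this
      linarith
    gcongr
    linarith
  have hmono : Monotone fun i => ‖q i‖ ^ 2 := fun i j hij => by
    linarith [hsq hij, sq_nonneg ‖q j - q i‖]
  have hbdd' : BddAbove (range fun i => ‖q i‖ ^ 2) := ⟨R ^ 2, forall_mem_range.2 hbdd⟩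
  set M := ⨆ i, ‖q i‖ ^ 2
  have hdist : ∀ {i j}, i ≤ j → dist (q j) (q i) ≤ √(M - ‖q i‖ ^ 2) := fun {i j} hij => by
    rw [dist_eq_norm, ← abs_norm]
    exact Real.abs_le_sqrt ((hsq hij).trans (by linarith [le_ciSup hbdd' j]))
  have hcauchy : CauchySeq q := by
    refine cauchySeq_of_le_tendsto_0 (fun i => 2 * √(M - ‖q i‖ ^ 2))
      (fun n m k hn hm => (dist_triangle_right _ _ (q k)).trans (by linarith [hdist hn, hdist hm]))
      ?_
    simpa [M] using (((tendsto_atTop_ciSup hmono hbdd').const_sub M).sqrt.const_mul 2)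
  obtain ⟨p, hp⟩ := cauchySeq_tendsto_of_complete hcauchy
  exact ⟨p, mem_iInter.2 fun i => (hclosed i).mem_of_tendsto hp
    (eventually_atTop.2 ⟨i, fun j hij => hD hij (hqD j)⟩)⟩

/-- Browder–Minty: Galerkin solutions show that the half-spaces `{u | 0 ≤ ⟪S w - f, w - u⟫}` have
the finite intersection property, and Minty's lemma turns a common point into a solution. -/
theorem IsStronglyMonotoneOp.surjective [CompleteSpace H] (hS : IsStronglyMonotoneOp c S)
    (hc : 0 < c) (hrad : IsRadiallyContinuous S) : Surjective S := by
  classical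
  intro f
  set D : Finset H → Set H := fun s => ⋂ w ∈ s, {u | 0 ≤ ⟪S w - f, w - u⟫}
  have hD : Antitone D := fun s t hst => biInter_subset_biInter_left (Finset.coe_subset.2 hst)
  have hclosed : ∀ s, IsClosed (D s) := fun s =>
    isClosed_biInter fun w _ => isClosed_le continuous_const (by fun_prop)
  have hconv : ∀ s, Convex ℝ (D s) := fun s => convex_iInter₂ fun w _ => by
    simp_rw [inner_sub_right, sub_nonneg]
    exact convex_halfSpace_le (innerₛₗ ℝ (S w - f)).isLinear _
  have hR : ∀ s, ∃ u ∈ D s, ‖u‖ ≤ ‖f - S 0‖ / c := fun s => by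
    obtain ⟨u, hu, huf⟩ := hS.exists_mem_sub_mem_orthogonal hc hrad (Submodule.span ℝ s) f
    refine ⟨u, mem_iInter₂.2 fun w hw => ?_, (le_div_iff₀' hc).2 ?_⟩
    · exact (hS.isMonotoneOp hc.le).inner_nonneg_of_sub_mem_orthogonal hu
        (Submodule.subset_span hw) huf
    · exact hS.mul_norm_le_of_inner_eq_zero (Submodule.inner_left_of_mem_orthogonal hu huf)
  obtain ⟨u, hu⟩ := hD.nonempty_iInter_of_isClosed_of_convex hclosed hconv hR
  exact ⟨u, hrad.eq_of_forall_inner_nonneg fun w => by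
    simpa [D] using mem_iInter.1 hu {w}⟩

end Hilbert

/-- If `A` is a radially continuous one-sided contraction on a real Hilbert
space, then `I - A` is a bijection with a continuous inverse. -/
theorem one_sided_contraction_id_sub_bijective
    {H : Type*} [NormedAddCommGroup H] [InnerProductSpace ℝ H] [CompleteSpace H]
    (A : H → H)
    (hArad : ∀ u w : H,
      ContinuousOn (fun t : ℝ => ⟪A (u + t • w), w⟫) (Set.Icc (0 : ℝ) 1))
    (m : ℝ) (hm : m < 1)
    (hA : ∀ u w : H, ⟪A u - A w, u - w⟫ ≤ m * ‖u - w‖ ^ 2) :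
    ∃ g : H → H, Continuous g ∧
      Function.LeftInverse g (fun u => u - A u) ∧
      Function.RightInverse g (fun u => u - A u) := by
  have hc : 0 < 1 - m := sub_pos.2 hm
  have hT : IsStronglyMonotoneOp (1 - m) fun u => u - A u := fun u w => by
    rw [sub_sub_sub_comm, inner_sub_left, real_inner_self_eq_norm_sq]
    linarith [hA u w]
  have hTrad : IsRadiallyContinuous fun u => u - A u := fun u w => by
    simp_rw [inner_sub_left]
    exact (Continuous.continuousOn (by fun_prop)).sub (hArad u w)
  have hbij : Bijective fun u => u - A u :=
    ⟨(hT.antilipschitzWith hc).injective, hT.surjective hc hTrad⟩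
  exact ⟨surjInv hbij.2, ((hT.antilipschitzWith hc).to_rightInverse
    (rightInverse_surjInv hbij.2)).continuous, leftInverse_surjInv hbij,
    rightInverse_surjInv hbij.2⟩
end

section
/- For a fixed u ∈ W^{1,p}(0,1), the operator T(u,·) : C[0,1] → C[0,1] defined by T(u,v)(t) = ∫₀^t ψ_q^{-1}( c(u,v) − ∫₀^s g(τ,u(τ),v(τ)) dτ ) ds + ∫₀¹ h₀(v(s)) dA₀(s) is continuous and compact (maps bounded sets to relatively compact sets). -/
noncomputable section

open MeasureTheory Set Filter Bornology

/-- `I` is the Riemann–Stieltjes integral `∫₀¹ f dA`. -/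
def IsRSIntegral (f A : ℝ → ℝ) (I : ℝ) : Prop :=
  ∀ ε > (0:ℝ), ∃ δ > (0:ℝ), ∀ (n : ℕ) (t ξ : ℕ → ℝ),
    0 < n → t 0 = 0 → t n = 1 →
    (∀ i < n, t i ≤ t (i+1) ∧ t (i+1) - t i ≤ δ ∧ ξ i ∈ Set.Icc (t i) (t (i+1))) →
    |(∑ i ∈ Finset.range n, f (ξ i) * (A (t (i+1)) - A (t i))) - I| ≤ ε

/-- `ψ_q(ζ) = |ζ|^{q-2} ζ`. -/
def psiQ (q ζ : ℝ) : ℝ := |ζ| ^ (q - 2) * ζ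

/-- `ψ_q⁻¹(η) = |η|^{(2-q)/(q-1)} η`. -/
def psiQInv (q η : ℝ) : ℝ := |η| ^ ((2 - q)/(q - 1)) * η

/-- The space `C[0,1]`. -/
abbrev C01 := C(Set.Icc (0:ℝ) 1, ℝ)

/-- Extension of `v ∈ C[0,1]` to `ℝ` by projection onto `[0,1]`. -/
def extC (v : C01) : ℝ → ℝ := fun t => v (Set.projIcc 0 1 (by norm_num) t)

/-- Smooth test functions compactly supported in `(0,1)`. -/
def TestFun (φ : ℝ → ℝ) : Prop :=
  ContDiff ℝ (⊤ : ℕ∞) φ ∧ tsupport φ ⊆ Set.Ioo (0 : ℝ) 1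

/-- `u'` is a weak derivative of `u` on `(0,1)`. -/
def IsWeakDerivOn (u u' : ℝ → ℝ) : Prop :=
  ∀ φ : ℝ → ℝ, TestFun φ →
    ∫ t in (0:ℝ)..1, u t * deriv φ t = - ∫ t in (0:ℝ)..1, u' t * φ t

/-- `u ∈ W^{1,p}(0,1)` with weak derivative `u'`. -/
def MemW1p (p : ℝ) (u u' : ℝ → ℝ) : Prop :=
  ContinuousOn u (Set.Icc 0 1) ∧ IsWeakDerivOn u u' ∧
  IntervalIntegrable (fun t => |u t| ^ p) volume 0 1 ∧
  IntervalIntegrable (fun t => |u' t| ^ p) volume 0 1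

/-- The integral operator `T(u,·)`: `T(u,v)(t) =
∫₀ᵗ ψ_q⁻¹(c(u,v) − ∫₀ˢ g(τ,u τ,v τ) dτ) ds + ∫₀¹ h₀(v) dA₀`. -/
def Tfun (q : ℝ) (g : ℝ → ℝ → ℝ → ℝ) (u : ℝ → ℝ)
    (c H0 : C01 → ℝ) (v : C01) (t : ℝ) : ℝ :=
  (∫ s in (0:ℝ)..t, psiQInv q (c v - ∫ τ in (0:ℝ)..s, g τ (u τ) (extC v τ))) + H0 v




lemma partition_mono {n : ℕ} {t : ℕ → ℝ} (hmono : ∀ i < n, t i ≤ t (i+1)) :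
    ∀ i j, i ≤ j → j ≤ n → t i ≤ t j := by
  intro i j hij hjn
  induction j with
  | zero => simp_all
  | succ k ih =>
    rcases Nat.lt_or_ge i (k+1) with h | h
    · exact le_trans (ih (by omega) (by omega)) (hmono k (by omega))
    · have : i = k+1 := by omega
      simp [this]

lemma unif_partition_valid (δ : ℝ) (hδ : 0 < δ) :
    ∃ (n : ℕ) (t ξ : ℕ → ℝ), 0 < n ∧ t 0 = 0 ∧ t n = 1 ∧
      (∀ i < n, t i ≤ t (i+1) ∧ t (i+1) - t i ≤ δ ∧ ξ i ∈ Set.Icc (t i) (t (i+1))) := by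
  obtain ⟨n, hn⟩ := exists_nat_gt (1/δ)
  have hn0 : 0 < n := by
    rcases Nat.eq_zero_or_pos n with h | h
    · subst h; simp at hn; exact absurd hn (not_lt.2 (by positivity))
    · exact h
  have hnR : (0:ℝ) < n := by exact_mod_cast hn0
  have hstep : ∀ i : ℕ, (i:ℝ)/n ≤ ((i+1:ℕ):ℝ)/n := by
    intro i
    rw [div_le_div_iff₀ hnR hnR]
    push_cast; nlinarith
  refine ⟨n, fun i => (i:ℝ)/n, fun i => (i:ℝ)/n, hn0, by simp, by field_simp, ?_⟩
  intro i hi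
  refine ⟨hstep i, ?_, le_refl _, hstep i⟩
  have : ((i+1:ℕ):ℝ)/n - (i:ℝ)/n = 1/n := by push_cast; field_simp; ring
  rw [this, div_le_iff₀ hnR]
  rw [div_lt_iff₀ hδ] at hn
  nlinarith

lemma partition_mem {n : ℕ} {t : ℕ → ℝ} (h0 : t 0 = 0) (h1 : t n = 1)
    (hmono : ∀ i < n, t i ≤ t (i+1)) : ∀ i ≤ n, t i ∈ Set.Icc (0:ℝ) 1 := by
  intro i hi
  exact ⟨h0 ▸ partition_mono hmono 0 i (Nat.zero_le _) hi,
    h1 ▸ partition_mono hmono i n hi le_rfl⟩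

lemma rs_sub_bound {f f' A : ℝ → ℝ} {I I' : ℝ}
    (hA : BoundedVariationOn A (Set.Icc 0 1))
    (hf : IsRSIntegral f A I) (hf' : IsRSIntegral f' A I')
    {ε₀ : ℝ} (hε₀ : 0 ≤ ε₀) (hb : ∀ s ∈ Set.Icc (0:ℝ) 1, |f s - f' s| ≤ ε₀) :
    |I - I'| ≤ ε₀ * (eVariationOn A (Set.Icc 0 1)).toReal := by
  set V := (eVariationOn A (Set.Icc 0 1)).toReal with hVdef
  have key : ∀ ε > (0:ℝ), |I - I'| ≤ 2*ε + ε₀ * V := by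
    intro ε hε
    obtain ⟨δ, hδ, H⟩ := hf ε hε
    obtain ⟨δ', hδ', H'⟩ := hf' ε hε
    obtain ⟨n, t, ξ, hn, h0, h1, hvalid⟩ := unif_partition_valid (min δ δ') (lt_min hδ hδ')
    have hS := H n t ξ hn h0 h1 (fun i hi =>
      ⟨(hvalid i hi).1, le_trans (hvalid i hi).2.1 (min_le_left _ _), (hvalid i hi).2.2⟩)
    have hS' := H' n t ξ hn h0 h1 (fun i hi =>
      ⟨(hvalid i hi).1, le_trans (hvalid i hi).2.1 (min_le_right _ _), (hvalid i hi).2.2⟩)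
    set S := ∑ i ∈ Finset.range n, f (ξ i) * (A (t (i+1)) - A (t i)) with hSdef
    set S' := ∑ i ∈ Finset.range n, f' (ξ i) * (A (t (i+1)) - A (t i)) with hS'def
    have htmem : ∀ i ≤ n, t i ∈ Set.Icc (0:ℝ) 1 :=
      partition_mem h0 h1 (fun i hi => (hvalid i hi).1)
    have hξmem : ∀ i < n, ξ i ∈ Set.Icc (0:ℝ) 1 := by
      intro i hi
      have h := (hvalid i hi).2.2
      exact ⟨le_trans (htmem i hi.le).1 h.1, le_trans h.2 (htmem (i+1) hi).2⟩
    have habs_le_V : ∑ i ∈ Finset.range n, |A (t (i+1)) - A (t i)| ≤ V := by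
      have hsum2 : ∑ i ∈ Finset.range n, edist (A (t (i+1))) (A (t i))
          ≤ eVariationOn A (Set.Icc 0 1) :=
        eVariationOn.sum_le_of_monotoneOn_Iic (f := A)
          (fun i hi j hj hij => partition_mono (fun k hk => (hvalid k hk).1) i j hij hj)
          htmem
      have hV : eVariationOn A (Set.Icc 0 1) ≠ ⊤ := hA
      have h2 := ENNReal.toReal_mono hV hsum2
      rw [ENNReal.toReal_sum (fun i _ => edist_ne_top _ _)] at h2
      refine le_trans (le_of_eq ?_) h2
      apply Finset.sum_congr rfl
      intro i _
      rw [edist_dist, Real.dist_eq, ENNReal.toReal_ofReal (abs_nonneg _)]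
    have hSS' : |S - S'| ≤ ε₀ * V := by
      have hsum : S - S' = ∑ i ∈ Finset.range n, (f (ξ i) - f' (ξ i)) * (A (t (i+1)) - A (t i)) := by
        rw [← Finset.sum_sub_distrib]; apply Finset.sum_congr rfl; intro i _; ring
      rw [hsum]
      calc |∑ i ∈ Finset.range n, (f (ξ i) - f' (ξ i)) * (A (t (i+1)) - A (t i))|
          ≤ ∑ i ∈ Finset.range n, |(f (ξ i) - f' (ξ i)) * (A (t (i+1)) - A (t i))| :=
            Finset.abs_sum_le_sum_abs _ _
        _ ≤ ∑ i ∈ Finset.range n, ε₀ * |A (t (i+1)) - A (t i)| := by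
            refine Finset.sum_le_sum fun i hi => ?_
            rw [abs_mul]
            exact mul_le_mul_of_nonneg_right (hb _ (hξmem i (Finset.mem_range.1 hi))) (abs_nonneg _)
        _ = ε₀ * ∑ i ∈ Finset.range n, |A (t (i+1)) - A (t i)| := by rw [Finset.mul_sum]
        _ ≤ ε₀ * V := mul_le_mul_of_nonneg_left habs_le_V hε₀
    calc |I - I'| ≤ |I - S| + (|S - S'| + |S' - I'|) := by
          have h1 := abs_sub_le I S I'
          have h2 := abs_sub_le S S' I'
          linarith
      _ ≤ ε + ((ε₀*V) + ε) := by
          rw [abs_sub_comm I S]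
          exact add_le_add hS (add_le_add hSS' hS')
      _ = 2*ε + ε₀*V := by ring
  by_contra h
  push_neg at h
  have h2 : 0 < (|I - I'| - ε₀*V)/4 := by linarith
  have := key _ h2
  linarith

lemma rs_zero (A : ℝ → ℝ) : IsRSIntegral (fun _ => 0) A 0 := by
  intro ε hε
  exact ⟨1, one_pos, fun n t ξ _ _ _ _ => by simp; linarith⟩

lemma rs_abs_bound {f A : ℝ → ℝ} {I : ℝ}
    (hA : BoundedVariationOn A (Set.Icc 0 1))
    (hf : IsRSIntegral f A I)
    {C : ℝ} (hC : 0 ≤ C) (hb : ∀ s ∈ Set.Icc (0:ℝ) 1, |f s| ≤ C) :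
    |I| ≤ C * (eVariationOn A (Set.Icc 0 1)).toReal := by
  have := rs_sub_bound hA hf (rs_zero A) hC (by simpa using hb)
  simpa using this



variable {q : ℝ}

lemma psiQInv_eq (hq : 1 < q) (η : ℝ) :
    psiQInv q η = if 0 ≤ η then η ^ (1/(q-1)) else -((-η) ^ (1/(q-1))) := by
  have hq1 : q - 1 ≠ 0 := by linarith
  have hm : (0:ℝ) < 1/(q-1) := by
    have : (0:ℝ) < q - 1 := by linarith
    positivity
  have hexp : (2 - q)/(q - 1) + 1 = 1/(q-1) := by field_simp; ring
  rcases lt_trichotomy η 0 with h | h | h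
  · rw [if_neg (not_le.2 h)]
    rw [psiQInv, abs_of_neg h]
    have hne : -η ≠ 0 := by linarith
    rw [← hexp, Real.rpow_add_one hne]
    ring
  · subst h
    simp only [psiQInv, abs_zero, mul_zero, if_pos le_rfl]
    rw [Real.zero_rpow (ne_of_gt hm)]
  · rw [if_pos h.le, psiQInv, abs_of_pos h, ← hexp, Real.rpow_add_one (ne_of_gt h)]

lemma continuous_rpow_const (hm : 0 < (1/(q-1))) : Continuous fun x : ℝ => x ^ (1/(q-1)) := by
  rw [continuous_iff_continuousAt]
  intro x
  rcases eq_or_ne x 0 with h | h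
  · subst h
    exact Real.continuousAt_rpow_const 0 _ (Or.inr hm.le)
  · exact Real.continuousAt_rpow_const x _ (Or.inl h)

lemma continuous_psiQInv (hq : 1 < q) : Continuous (psiQInv q) := by
  have hm : 0 < 1/(q-1) := by
    have : (0:ℝ) < q - 1 := by linarith
    positivity
  have heq : psiQInv q = fun η => if (0:ℝ) ≤ η then η ^ (1/(q-1)) else -((-η) ^ (1/(q-1))) := by
    funext η; exact psiQInv_eq hq η
  rw [heq]
  refine Continuous.if_le (continuous_rpow_const hm)
    (((continuous_rpow_const hm).comp continuous_neg).neg) continuous_const continuous_id ?_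
  intro x hx
  simp only [← hx, neg_zero]
  rw [Real.zero_rpow (ne_of_gt hm)]
  norm_num

lemma strictMono_psiQInv (hq : 1 < q) : StrictMono (psiQInv q) := by
  have hm : 0 < 1/(q-1) := by
    have : (0:ℝ) < q - 1 := by linarith
    positivity
  intro x y hxy
  rw [psiQInv_eq hq, psiQInv_eq hq]
  rcases le_or_gt 0 x with hx | hx
  · rw [if_pos hx, if_pos (le_trans hx hxy.le)]
    exact Real.rpow_lt_rpow hx hxy hm
  · rw [if_neg (not_le.2 hx)]
    rcases le_or_gt 0 y with hy | hy
    · rw [if_pos hy]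
      have h1 : 0 < (-x) ^ (1/(q-1)) := Real.rpow_pos_of_pos (by linarith) _
      have h2 : 0 ≤ y ^ (1/(q-1)) := Real.rpow_nonneg hy _
      linarith
    · rw [if_neg (not_le.2 hy)]
      have : (-y) ^ (1/(q-1)) < (-x) ^ (1/(q-1)) :=
        Real.rpow_lt_rpow (by linarith) (by linarith) hm
      linarith

lemma psiQInv_rpow (hq : 1 < q) {a : ℝ} (ha : 0 ≤ a) : psiQInv q (a ^ (q-1)) = a := by
  have hq1 : q - 1 ≠ 0 := by linarith
  rw [psiQInv_eq hq, if_pos (Real.rpow_nonneg ha _), ← Real.rpow_mul ha,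
    mul_one_div, div_self hq1, Real.rpow_one]

lemma psiQInv_neg (q η : ℝ) : psiQInv q (-η) = -psiQInv q η := by
  simp [psiQInv, abs_neg, mul_neg]

lemma psiQInv_mono (hq : 1 < q) : Monotone (psiQInv q) := (strictMono_psiQInv hq).monotone



lemma extC_cont (v : C01) : Continuous (extC v) :=
  v.continuous.comp continuous_projIcc

lemma extC_abs_le (v : C01) (τ : ℝ) : |extC v τ| ≤ ‖v‖ := by
  simpa [extC, Real.norm_eq_abs] using v.norm_coe_le_norm (Set.projIcc 0 1 (by norm_num) τ)

lemma extC_dist_le (v v' : C01) (τ : ℝ) : |extC v' τ - extC v τ| ≤ dist v' v := by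
  simpa [extC, Real.dist_eq] using ContinuousMap.dist_apply_le_dist (f := v') (g := v)
    (Set.projIcc 0 1 (by norm_num) τ)

section G
variable {g : ℝ → ℝ → ℝ → ℝ} {u : ℝ → ℝ}

/-- the abbreviation for `∫₀ˢ g(τ, u τ, v τ) dτ` -/
def Gf (g : ℝ → ℝ → ℝ → ℝ) (u : ℝ → ℝ) (v : C01) (s : ℝ) : ℝ :=
  ∫ τ in (0:ℝ)..s, g τ (u τ) (extC v τ)

lemma integrand_contOn (hg : Continuous fun x : ℝ × ℝ × ℝ => g x.1 x.2.1 x.2.2)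
    (hu : ContinuousOn u (Set.Icc 0 1)) (v : C01) :
    ContinuousOn (fun τ => g τ (u τ) (extC v τ)) (Set.Icc 0 1) := by
  have : ContinuousOn (fun τ : ℝ => ((τ, u τ, extC v τ) : ℝ × ℝ × ℝ)) (Set.Icc 0 1) :=
    continuousOn_id.prodMk (hu.prodMk (extC_cont v).continuousOn)
  exact hg.comp_continuousOn this

lemma integrand_intble (hg : Continuous fun x : ℝ × ℝ × ℝ => g x.1 x.2.1 x.2.2)
    (hu : ContinuousOn u (Set.Icc 0 1)) (v : C01) {s : ℝ} (hs : s ∈ Set.Icc (0:ℝ) 1) :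
    IntervalIntegrable (fun τ => g τ (u τ) (extC v τ)) volume 0 s := by
  apply ContinuousOn.intervalIntegrable
  apply (integrand_contOn hg hu v).mono
  rw [Set.uIcc_of_le hs.1]
  exact Set.Icc_subset_Icc le_rfl hs.2

/-- a uniform bound for `g` on the relevant compact set -/
lemma g_bound (hg : Continuous fun x : ℝ × ℝ × ℝ => g x.1 x.2.1 x.2.2)
    (hu : ContinuousOn u (Set.Icc 0 1)) (R : ℝ) :
    ∃ K : ℝ, 0 ≤ K ∧ ∀ τ ∈ Set.Icc (0:ℝ) 1, ∀ a : ℝ, |a| ≤ R → |g τ (u τ) a| ≤ K := by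
  have hcpt : IsCompact (Set.Icc (0:ℝ) 1 ×ˢ Set.Icc (-R) R) :=
    isCompact_Icc.prod isCompact_Icc
  have hcont : ContinuousOn (fun p : ℝ × ℝ => g p.1 (u p.1) p.2)
      (Set.Icc (0:ℝ) 1 ×ˢ Set.Icc (-R) R) := by
    have : ContinuousOn (fun p : ℝ × ℝ => ((p.1, u p.1, p.2) : ℝ × ℝ × ℝ))
        (Set.Icc (0:ℝ) 1 ×ˢ Set.Icc (-R) R) :=
      (continuous_fst.continuousOn).prodMk
        (((hu.comp continuous_fst.continuousOn (fun p hp => hp.1)).prodMk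
          continuous_snd.continuousOn))
    exact hg.comp_continuousOn this
  obtain ⟨K, hK⟩ := hcpt.exists_bound_of_continuousOn hcont
  refine ⟨max K 0, le_max_right _ _, fun τ hτ a ha => ?_⟩
  have := hK (τ, a) ⟨hτ, abs_le.1 ha⟩
  simp only [Real.norm_eq_abs] at this
  exact le_trans this (le_max_left _ _)

/-- uniform continuity of `g (τ, u τ, ·)` -/
lemma g_unif (hg : Continuous fun x : ℝ × ℝ × ℝ => g x.1 x.2.1 x.2.2)
    (hu : ContinuousOn u (Set.Icc 0 1)) (R : ℝ) {ε : ℝ} (hε : 0 < ε) :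
    ∃ δ > (0:ℝ), ∀ τ ∈ Set.Icc (0:ℝ) 1, ∀ a b : ℝ, |a| ≤ R → |b| ≤ R → |a - b| ≤ δ →
      |g τ (u τ) a - g τ (u τ) b| ≤ ε := by
  set S := Set.Icc (0:ℝ) 1 ×ˢ Set.Icc (-R) R
  have hcpt : IsCompact S := isCompact_Icc.prod isCompact_Icc
  have hcont : ContinuousOn (fun p : ℝ × ℝ => g p.1 (u p.1) p.2) S := by
    have : ContinuousOn (fun p : ℝ × ℝ => ((p.1, u p.1, p.2) : ℝ × ℝ × ℝ)) S :=
      (continuous_fst.continuousOn).prodMk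
        (((hu.comp continuous_fst.continuousOn (fun p hp => hp.1)).prodMk
          continuous_snd.continuousOn))
    exact hg.comp_continuousOn this
  have huc := hcpt.uniformContinuousOn_of_continuous hcont
  rw [Metric.uniformContinuousOn_iff_le] at huc
  obtain ⟨δ, hδ, H⟩ := huc ε hε
  refine ⟨δ, hδ, fun τ hτ a b ha hb hab => ?_⟩
  have h1 : ((τ, a) : ℝ × ℝ) ∈ S := ⟨hτ, abs_le.1 ha⟩
  have h2 : ((τ, b) : ℝ × ℝ) ∈ S := ⟨hτ, abs_le.1 hb⟩
  have hd : dist ((τ, a) : ℝ × ℝ) ((τ, b) : ℝ × ℝ) ≤ δ := by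
    rw [Prod.dist_eq]
    simp [Real.dist_eq, hab, hδ.le]
  have := H _ h1 _ h2 hd
  rwa [Real.dist_eq] at this

lemma Gf_bound (hg : Continuous fun x : ℝ × ℝ × ℝ => g x.1 x.2.1 x.2.2)
    (hu : ContinuousOn u (Set.Icc 0 1)) {R K : ℝ}
    (hK : ∀ τ ∈ Set.Icc (0:ℝ) 1, ∀ a : ℝ, |a| ≤ R → |g τ (u τ) a| ≤ K)
    (v : C01) (hv : ‖v‖ ≤ R) {s : ℝ} (hs : s ∈ Set.Icc (0:ℝ) 1) :
    |Gf g u v s| ≤ K := by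
  have h := intervalIntegral.norm_integral_le_of_norm_le_const
    (f := fun τ => g τ (u τ) (extC v τ)) (a := 0) (b := s) (C := K) ?_
  · rw [Real.norm_eq_abs] at h
    refine le_trans h ?_
    have : |s - 0| ≤ 1 := by rw [sub_zero, abs_of_nonneg hs.1]; exact hs.2
    have hK0 : 0 ≤ K := le_trans (abs_nonneg _) (hK 0 (by norm_num) (extC v 0)
      (le_trans (extC_abs_le v 0) hv))
    nlinarith
  · intro x hx
    rw [Set.uIoc_of_le hs.1] at hx
    rw [Real.norm_eq_abs]
    exact hK x ⟨hx.1.le, le_trans hx.2 hs.2⟩ _ (le_trans (extC_abs_le v x) hv)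

lemma Gf_contOn (hg : Continuous fun x : ℝ × ℝ × ℝ => g x.1 x.2.1 x.2.2)
    (hu : ContinuousOn u (Set.Icc 0 1)) (v : C01) :
    ContinuousOn (Gf g u v) (Set.Icc 0 1) := by
  have h := intervalIntegral.continuousOn_primitive_interval (a := 0) (b := 1) (μ := volume)
    (f := fun τ => g τ (u τ) (extC v τ)) ?_
  · rw [Set.uIcc_of_le (by norm_num : (0:ℝ) ≤ 1)] at h
    exact h
  · rw [Set.uIcc_of_le (by norm_num : (0:ℝ) ≤ 1)]
    exact (integrand_contOn hg hu v).integrableOn_compact isCompact_Icc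

/-- closeness of `Gf` for close arguments -/
lemma Gf_close (hg : Continuous fun x : ℝ × ℝ × ℝ => g x.1 x.2.1 x.2.2)
    (hu : ContinuousOn u (Set.Icc 0 1)) (R : ℝ) {ε : ℝ} (hε : 0 < ε) :
    ∃ δ > (0:ℝ), ∀ v v' : C01, ‖v‖ ≤ R → ‖v'‖ ≤ R → dist v' v ≤ δ →
      ∀ s ∈ Set.Icc (0:ℝ) 1, |Gf g u v' s - Gf g u v s| ≤ ε := by
  obtain ⟨δ, hδ, H⟩ := g_unif hg hu R hε
  refine ⟨δ, hδ, fun v v' hv hv' hdist s hs => ?_⟩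
  have hsub : Gf g u v' s - Gf g u v s
      = ∫ τ in (0:ℝ)..s, (g τ (u τ) (extC v' τ) - g τ (u τ) (extC v τ)) := by
    rw [Gf, Gf, ← intervalIntegral.integral_sub (integrand_intble hg hu v' hs)
      (integrand_intble hg hu v hs)]
  rw [hsub]
  have h := intervalIntegral.norm_integral_le_of_norm_le_const
    (f := fun τ => g τ (u τ) (extC v' τ) - g τ (u τ) (extC v τ)) (a := 0) (b := s) (C := ε) ?_
  · rw [Real.norm_eq_abs] at h
    refine le_trans h ?_
    have : |s - 0| ≤ 1 := by rw [sub_zero, abs_of_nonneg hs.1]; exact hs.2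
    nlinarith
  · intro x hx
    rw [Set.uIoc_of_le hs.1] at hx
    rw [Real.norm_eq_abs]
    exact H x ⟨hx.1.le, le_trans hx.2 hs.2⟩ _ _ (le_trans (extC_abs_le v' x) hv')
      (le_trans (extC_abs_le v x) hv) (le_trans (extC_dist_le v v' x) hdist)
end G
-- auxiliary lemmas, part 2: bounds and continuity helpers
lemma cont_bound {f : ℝ → ℝ} (hf : Continuous f) (R : ℝ) :
    ∃ S : ℝ, 0 ≤ S ∧ ∀ x : ℝ, |x| ≤ R → |f x| ≤ S := by
  obtain ⟨S, hS⟩ := (isCompact_Icc (a := -R) (b := R)).exists_bound_of_continuousOn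
    hf.continuousOn
  refine ⟨max S 0, le_max_right _ _, fun x hx => ?_⟩
  have := hS x (abs_le.1 hx)
  rw [Real.norm_eq_abs] at this
  exact le_trans this (le_max_left _ _)

lemma unif_cont {f : ℝ → ℝ} (hf : Continuous f) (R : ℝ) {ε : ℝ} (hε : 0 < ε) :
    ∃ δ > (0:ℝ), ∀ x y : ℝ, |x| ≤ R → |y| ≤ R → |x - y| ≤ δ → |f x - f y| ≤ ε := by
  have huc := (isCompact_Icc (a := -R) (b := R)).uniformContinuousOn_of_continuous
    hf.continuousOn
  rw [Metric.uniformContinuousOn_iff_le] at huc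
  obtain ⟨δ, hδ, H⟩ := huc ε hε
  refine ⟨δ, hδ, fun x y hx hy hxy => ?_⟩
  have := H x (abs_le.1 hx) y (abs_le.1 hy) (by rwa [Real.dist_eq])
  rwa [Real.dist_eq] at this
-- more auxiliary lemmas

lemma rs_close {h : ℝ → ℝ} (hh : Continuous h) {A : ℝ → ℝ}
    (hA : BoundedVariationOn A (Set.Icc 0 1)) (R : ℝ) {ε : ℝ} (hε : 0 < ε) :
    ∃ δ > (0:ℝ), ∀ v v' : C01, ‖v‖ ≤ R → ‖v'‖ ≤ R → dist v' v ≤ δ →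
      ∀ Ia Ib : ℝ, IsRSIntegral (fun s => h (extC v s)) A Ia →
        IsRSIntegral (fun s => h (extC v' s)) A Ib → |Ib - Ia| ≤ ε := by
  set V := (eVariationOn A (Set.Icc 0 1)).toReal with hV
  have hV0 : 0 ≤ V := ENNReal.toReal_nonneg
  have hεV : 0 < ε/(V+1) := by positivity
  obtain ⟨δ, hδ, H⟩ := unif_cont hh R hεV
  refine ⟨δ, hδ, fun v v' hv hv' hd Ia Ib ha hb => ?_⟩
  have key := rs_sub_bound hA hb ha hεV.le (fun s hs => by
    exact H _ _ (le_trans (extC_abs_le v' s) hv') (le_trans (extC_abs_le v s) hv)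
      (le_trans (extC_dist_le v v' s) hd))
  refine le_trans key ?_
  rw [div_mul_eq_mul_div, div_le_iff₀ (by positivity)]
  nlinarith

lemma integral_diff_bound {f f' : ℝ → ℝ} {t C : ℝ} (ht : t ∈ Set.Icc (0:ℝ) 1) (hC : 0 ≤ C)
    (hf : IntervalIntegrable f volume 0 t) (hf' : IntervalIntegrable f' volume 0 t)
    (hb : ∀ s ∈ Set.Icc (0:ℝ) 1, |f s - f' s| ≤ C) :
    |(∫ s in (0:ℝ)..t, f s) - ∫ s in (0:ℝ)..t, f' s| ≤ C := by
  rw [← intervalIntegral.integral_sub hf hf']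
  have h := intervalIntegral.norm_integral_le_of_norm_le_const
    (f := fun s => f s - f' s) (C := C) (a := 0) (b := t) ?_
  · rw [Real.norm_eq_abs] at h
    refine le_trans h ?_
    have h1 : |t - 0| ≤ 1 := by rw [sub_zero, abs_of_nonneg ht.1]; exact ht.2
    nlinarith
  · intro x hx
    rw [Set.uIoc_of_le ht.1] at hx
    rw [Real.norm_eq_abs]
    exact hb x ⟨hx.1.le, le_trans hx.2 ht.2⟩

section Main
variable {q : ℝ} {g : ℝ → ℝ → ℝ → ℝ} {u : ℝ → ℝ}

/-- `Φ_v(x) = ∫₀¹ ψ_q⁻¹(x − G_v(s)) ds` -/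
def Phi (q : ℝ) (g : ℝ → ℝ → ℝ → ℝ) (u : ℝ → ℝ) (v : C01) (x : ℝ) : ℝ :=
  ∫ s in (0:ℝ)..1, psiQInv q (x - Gf g u v s)

lemma outer_intble (hq : 1 < q) (hg : Continuous fun x : ℝ × ℝ × ℝ => g x.1 x.2.1 x.2.2)
    (hu : ContinuousOn u (Set.Icc 0 1)) (v : C01) (x : ℝ) {t : ℝ} (ht : t ∈ Set.Icc (0:ℝ) 1) :
    IntervalIntegrable (fun s => psiQInv q (x - Gf g u v s)) volume 0 t := by
  apply ContinuousOn.intervalIntegrable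
  apply ((continuous_psiQInv hq).comp_continuousOn
    (continuousOn_const.sub (Gf_contOn hg hu v))).mono
  rw [Set.uIcc_of_le ht.1]
  exact Set.Icc_subset_Icc le_rfl ht.2

lemma Phi_strict (hq : 1 < q) (hg : Continuous fun x : ℝ × ℝ × ℝ => g x.1 x.2.1 x.2.2)
    (hu : ContinuousOn u (Set.Icc 0 1)) (v : C01) {x y : ℝ} (hxy : x < y) :
    Phi q g u v x < Phi q g u v y := by
  have hmem : (1:ℝ) ∈ Set.Icc (0:ℝ) 1 := by norm_num
  have h1 := outer_intble hq hg hu v x hmem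
  have h2 := outer_intble hq hg hu v y hmem
  have hpos : 0 < ∫ s in (0:ℝ)..1,
      (psiQInv q (y - Gf g u v s) - psiQInv q (x - Gf g u v s)) := by
    apply intervalIntegral.intervalIntegral_pos_of_pos_on (h2.sub h1) ?_ one_pos
    intro s hs
    have := strictMono_psiQInv hq (show x - Gf g u v s < y - Gf g u v s by linarith)
    linarith
  rw [intervalIntegral.integral_sub h2 h1] at hpos
  unfold Phi
  linarith

lemma Phi_mono (hq : 1 < q) (hg : Continuous fun x : ℝ × ℝ × ℝ => g x.1 x.2.1 x.2.2)
    (hu : ContinuousOn u (Set.Icc 0 1)) (v : C01) {x y : ℝ} (hxy : x ≤ y) :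
    Phi q g u v x ≤ Phi q g u v y := by
  rcases eq_or_lt_of_le hxy with h | h
  · rw [h]
  · exact (Phi_strict hq hg hu v h).le

lemma Phi_ge_const (hq : 1 < q) (hg : Continuous fun x : ℝ × ℝ × ℝ => g x.1 x.2.1 x.2.2)
    (hu : ContinuousOn u (Set.Icc 0 1)) (v : C01) {x b : ℝ}
    (hb : ∀ s ∈ Set.Icc (0:ℝ) 1, b ≤ x - Gf g u v s) :
    psiQInv q b ≤ Phi q g u v x := by
  have hmem : (1:ℝ) ∈ Set.Icc (0:ℝ) 1 := by norm_num
  have := intervalIntegral.integral_mono_on (μ := volume) (a := 0) (b := 1)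
    (f := fun _ => psiQInv q b) (g := fun s => psiQInv q (x - Gf g u v s))
    (by norm_num) intervalIntegrable_const (outer_intble hq hg hu v x hmem)
    (fun s hs => psiQInv_mono hq (hb s hs))
  simpa [Phi] using this

lemma Phi_le_const (hq : 1 < q) (hg : Continuous fun x : ℝ × ℝ × ℝ => g x.1 x.2.1 x.2.2)
    (hu : ContinuousOn u (Set.Icc 0 1)) (v : C01) {x b : ℝ}
    (hb : ∀ s ∈ Set.Icc (0:ℝ) 1, x - Gf g u v s ≤ b) :
    Phi q g u v x ≤ psiQInv q b := by
  have hmem : (1:ℝ) ∈ Set.Icc (0:ℝ) 1 := by norm_num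
  have := intervalIntegral.integral_mono_on (μ := volume) (a := 0) (b := 1)
    (g := fun _ => psiQInv q b) (f := fun s => psiQInv q (x - Gf g u v s))
    (by norm_num) (outer_intble hq hg hu v x hmem) intervalIntegrable_const
    (fun s hs => psiQInv_mono hq (hb s hs))
  simpa [Phi] using this

end Main

section CLemmas
variable {q : ℝ} {g : ℝ → ℝ → ℝ → ℝ} {u : ℝ → ℝ} {h₀ h₁ A₀ A₁ : ℝ → ℝ} {c H0 : C01 → ℝ}

lemma c_bound (hq : 1 < q) (hg : Continuous fun x : ℝ × ℝ × ℝ => g x.1 x.2.1 x.2.2)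
    (hucont : ContinuousOn u (Set.Icc 0 1))
    (hh₀ : Continuous h₀) (hh₁ : Continuous h₁)
    (hA₀ : BoundedVariationOn A₀ (Set.Icc 0 1)) (hA₁ : BoundedVariationOn A₁ (Set.Icc 0 1))
    (hc : ∀ v : C01, ∃ I₁ : ℝ,
      IsRSIntegral (fun s => h₀ (extC v s)) A₀ (H0 v) ∧
      IsRSIntegral (fun s => h₁ (extC v s)) A₁ I₁ ∧
      Phi q g u v (c v) = I₁ - H0 v)
    (R : ℝ) :
    ∃ B : ℝ, 0 ≤ B ∧ ∀ v : C01, ‖v‖ ≤ R → |c v| ≤ B := by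
  obtain ⟨K, hK0, hK⟩ := g_bound hg hucont R
  obtain ⟨S₀, hS₀0, hS₀⟩ := cont_bound hh₀ R
  obtain ⟨S₁, hS₁0, hS₁⟩ := cont_bound hh₁ R
  set V₀ := (eVariationOn A₀ (Set.Icc 0 1)).toReal with hV₀
  set V₁ := (eVariationOn A₁ (Set.Icc 0 1)).toReal with hV₁
  have hV₀0 : 0 ≤ V₀ := ENNReal.toReal_nonneg
  have hV₁0 : 0 ≤ V₁ := ENNReal.toReal_nonneg
  set RHS := S₁*V₁ + S₀*V₀ with hRHSdef
  have hRHS0 : 0 ≤ RHS := by positivity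
  set B' := (RHS + 1) ^ (q-1) with hB'def
  have hB'0 : 0 ≤ B' := Real.rpow_nonneg (by linarith) _
  have hψB' : psiQInv q B' = RHS + 1 := psiQInv_rpow hq (by linarith)
  refine ⟨K + B', by linarith, fun v hv => ?_⟩
  obtain ⟨I₁, hH0, hI₁, hcomp⟩ := hc v
  have hH0b : |H0 v| ≤ S₀ * V₀ := rs_abs_bound hA₀ hH0 hS₀0
    (fun s _ => hS₀ _ (le_trans (extC_abs_le v s) hv))
  have hI₁b : |I₁| ≤ S₁ * V₁ := rs_abs_bound hA₁ hI₁ hS₁0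
    (fun s _ => hS₁ _ (le_trans (extC_abs_le v s) hv))
  have hGb : ∀ s ∈ Set.Icc (0:ℝ) 1, |Gf g u v s| ≤ K :=
    fun s hs => Gf_bound hg hucont hK v hv hs
  have hI₁b' := abs_le.1 hI₁b
  have hH0b' := abs_le.1 hH0b
  rw [abs_le]
  constructor
  · by_contra h
    push_neg at h
    have hle : Phi q g u v (c v) ≤ psiQInv q (-B') := by
      apply Phi_le_const hq hg hucont v
      intro s hs
      have := abs_le.1 (hGb s hs)
      linarith
    rw [psiQInv_neg, hψB'] at hle
    rw [hcomp] at hle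
    linarith
  · by_contra h
    push_neg at h
    have hge : psiQInv q B' ≤ Phi q g u v (c v) := by
      apply Phi_ge_const hq hg hucont v
      intro s hs
      have := abs_le.1 (hGb s hs)
      linarith
    rw [hψB', hcomp] at hge
    linarith

lemma c_close (hq : 1 < q) (hg : Continuous fun x : ℝ × ℝ × ℝ => g x.1 x.2.1 x.2.2)
    (hucont : ContinuousOn u (Set.Icc 0 1))
    (hh₀ : Continuous h₀) (hh₁ : Continuous h₁)
    (hA₀ : BoundedVariationOn A₀ (Set.Icc 0 1)) (hA₁ : BoundedVariationOn A₁ (Set.Icc 0 1))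
    (hc : ∀ v : C01, ∃ I₁ : ℝ,
      IsRSIntegral (fun s => h₀ (extC v s)) A₀ (H0 v) ∧
      IsRSIntegral (fun s => h₁ (extC v s)) A₁ I₁ ∧
      Phi q g u v (c v) = I₁ - H0 v)
    (v : C01) {ε : ℝ} (hε : 0 < ε) :
    ∃ δ > (0:ℝ), ∀ v' : C01, dist v' v ≤ δ → |c v' - c v| ≤ ε := by
  set R := ‖v‖ + 1 with hRdef
  have hvR : ‖v‖ ≤ R := by rw [hRdef]; linarith
  obtain ⟨K, hK0, hK⟩ := g_bound hg hucont R
  set ε' := min ε 1 with hε'def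
  have hε'0 : 0 < ε' := lt_min hε one_pos
  have hε'1 : ε' ≤ 1 := min_le_right _ _
  have hm₁ : 0 < Phi q g u v (c v + ε') - Phi q g u v (c v) := by
    have := Phi_strict hq hg hucont v (show c v < c v + ε' by linarith)
    linarith
  have hm₂ : 0 < Phi q g u v (c v) - Phi q g u v (c v - ε') := by
    have := Phi_strict hq hg hucont v (show c v - ε' < c v by linarith)
    linarith
  set m := min (Phi q g u v (c v + ε') - Phi q g u v (c v))
    (Phi q g u v (c v) - Phi q g u v (c v - ε')) with hmdef
  have hm0 : 0 < m := lt_min hm₁ hm₂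
  set Rψ := |c v| + 1 + K with hRψdef
  obtain ⟨δψ, hδψ0, Hψ⟩ := unif_cont (continuous_psiQInv hq) Rψ (show 0 < m/4 by linarith)
  obtain ⟨δ₁, hδ₁0, H₁⟩ := Gf_close hg hucont R hδψ0
  obtain ⟨δ₂, hδ₂0, H₂⟩ := rs_close hh₀ hA₀ R (show 0 < m/4 by linarith)
  obtain ⟨δ₃, hδ₃0, H₃⟩ := rs_close hh₁ hA₁ R (show 0 < m/4 by linarith)
  refine ⟨min (min 1 δ₁) (min δ₂ δ₃), by positivity, fun v' hd => ?_⟩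
  have hd1 : dist v' v ≤ 1 := le_trans hd (le_trans (min_le_left _ _) (min_le_left _ _))
  have hdδ₁ : dist v' v ≤ δ₁ := le_trans hd (le_trans (min_le_left _ _) (min_le_right _ _))
  have hdδ₂ : dist v' v ≤ δ₂ := le_trans hd (le_trans (min_le_right _ _) (min_le_left _ _))
  have hdδ₃ : dist v' v ≤ δ₃ := le_trans hd (le_trans (min_le_right _ _) (min_le_right _ _))
  have hv'R : ‖v'‖ ≤ R := by
    have h2 := norm_sub_norm_le v' v
    rw [← dist_eq_norm] at h2
    rw [hRdef]
    linarith
  obtain ⟨I₁, hH0v, hI₁v, hcompv⟩ := hc v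
  obtain ⟨I₁', hH0v', hI₁v', hcompv'⟩ := hc v'
  have hGv' := H₁ v v' hvR hv'R hdδ₁
  have hGbv : ∀ s ∈ Set.Icc (0:ℝ) 1, |Gf g u v s| ≤ K :=
    fun s hs => Gf_bound hg hucont hK v hvR hs
  have hGbv' : ∀ s ∈ Set.Icc (0:ℝ) 1, |Gf g u v' s| ≤ K :=
    fun s hs => Gf_bound hg hucont hK v' hv'R hs
  have hmem1 : (1:ℝ) ∈ Set.Icc (0:ℝ) 1 := by norm_num
  have hPhidiff : ∀ x : ℝ, |x - c v| ≤ 1 → |Phi q g u v' x - Phi q g u v x| ≤ m/4 := by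
    intro x hx
    apply integral_diff_bound hmem1 (by linarith)
      (outer_intble hq hg hucont v' x hmem1) (outer_intble hq hg hucont v x hmem1)
    intro s hs
    have hxb : |x| ≤ |c v| + 1 := by
      have := abs_le.1 hx
      rw [abs_le]
      constructor <;> [skip; skip] <;> cases' abs_le.1 (le_refl |c v|) with h1 h2 <;> linarith [neg_abs_le (c v), le_abs_self (c v)]
    apply Hψ
    · rw [hRψdef]
      have := abs_le.1 (hGbv' s hs)
      have := abs_le.1 hxb
      rw [abs_le]; constructor <;> linarith
    · rw [hRψdef]
      have := abs_le.1 (hGbv s hs)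
      have := abs_le.1 hxb
      rw [abs_le]; constructor <;> linarith
    · have h := abs_le.1 (hGv' s hs)
      rw [abs_le]; constructor <;> [skip; skip] <;> simp only [sub_sub_sub_cancel_left] <;> linarith
  have hH0diff : |H0 v' - H0 v| ≤ m/4 := H₂ v v' hvR hv'R hdδ₂ _ _ hH0v hH0v'
  have hI₁diff : |I₁' - I₁| ≤ m/4 := H₃ v v' hvR hv'R hdδ₃ _ _ hI₁v hI₁v'
  have hmle₁ : m ≤ Phi q g u v (c v + ε') - Phi q g u v (c v) := min_le_left _ _
  have hmle₂ : m ≤ Phi q g u v (c v) - Phi q g u v (c v - ε') := min_le_right _ _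
  have hup : c v' < c v + ε' := by
    by_contra hcon
    push_neg at hcon
    have h1 : Phi q g u v' (c v + ε') ≤ Phi q g u v' (c v') := Phi_mono hq hg hucont v' hcon
    have h4 := abs_le.1 (hPhidiff (c v + ε') (by rw [add_sub_cancel_left, abs_of_pos hε'0]; exact hε'1))
    have h5 := abs_le.1 hH0diff
    have h6 := abs_le.1 hI₁diff
    rw [hcompv'] at h1
    linarith [hcompv]
  have hdown : c v - ε' < c v' := by
    by_contra hcon
    push_neg at hcon
    have h1 : Phi q g u v' (c v') ≤ Phi q g u v' (c v - ε') := Phi_mono hq hg hucont v' hcon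
    have h4 := abs_le.1 (hPhidiff (c v - ε') (by rw [sub_sub_cancel_left, abs_neg, abs_of_pos hε'0]; exact hε'1))
    have h5 := abs_le.1 hH0diff
    have h6 := abs_le.1 hI₁diff
    rw [hcompv'] at h1
    linarith [hcompv]
  have : |c v' - c v| ≤ ε' := by
    rw [abs_le]; constructor <;> linarith
  exact le_trans this (min_le_left _ _)

end CLemmas
/-- Lemma 8: for fixed `u ∈ W^{1,p}(0,1)`, the operator `T(u,·)` is continuous
and compact on `C[0,1]`. -/
theorem T_continuous_and_compact
    (p q : ℝ) (hq : 1 < q)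
    (g : ℝ → ℝ → ℝ → ℝ) (hg : Continuous fun x : ℝ × ℝ × ℝ => g x.1 x.2.1 x.2.2)
    (h₀ h₁ : ℝ → ℝ) (hh₀ : Continuous h₀) (hh₁ : Continuous h₁)
    (A₀ A₁ : ℝ → ℝ)
    (hA₀ : BoundedVariationOn A₀ (Set.Icc 0 1))
    (hA₁ : BoundedVariationOn A₁ (Set.Icc 0 1))
    (u u' : ℝ → ℝ) (hu : MemW1p p u u')
    -- `H0 v = ∫₀¹ h₀(v) dA₀` and `c v` is the shooting constant for `(u,v)`
    (c H0 : C01 → ℝ)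
    (hc : ∀ v : C01, ∃ I₁ : ℝ,
      IsRSIntegral (fun s => h₀ (extC v s)) A₀ (H0 v) ∧
      IsRSIntegral (fun s => h₁ (extC v s)) A₁ I₁ ∧
      (∫ s in (0:ℝ)..1,
          psiQInv q (c v - ∫ τ in (0:ℝ)..s, g τ (u τ) (extC v τ)))
        = I₁ - H0 v) :
    -- continuity of T(u,·) in the sup norm
    (∀ v : C01, ∀ ε > (0:ℝ), ∃ δ > (0:ℝ), ∀ v' : C01, dist v' v ≤ δ →
      ∀ t ∈ Set.Icc (0:ℝ) 1,
        |Tfun q g u c H0 v' t - Tfun q g u c H0 v t| ≤ ε) ∧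
    -- compactness: bounded families are mapped to relatively compact ones
    (∀ v : ℕ → C01, (∃ M : ℝ, ∀ n, ‖v n‖ ≤ M) →
      ∃ (σ : ℕ → ℕ) (w : ℝ → ℝ), StrictMono σ ∧
        TendstoUniformlyOn (fun k => Tfun q g u c H0 (v (σ k))) w atTop
          (Set.Icc (0:ℝ) 1)) := by
  classical
  obtain ⟨hucont, -, -, -⟩ := hu
  have hcPhi : ∀ v : C01, ∃ I₁ : ℝ,
      IsRSIntegral (fun s => h₀ (extC v s)) A₀ (H0 v) ∧
      IsRSIntegral (fun s => h₁ (extC v s)) A₁ I₁ ∧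
      Phi q g u v (c v) = I₁ - H0 v := hc
  have hTfun : ∀ (v : C01) (t : ℝ), Tfun q g u c H0 v t
      = (∫ s in (0:ℝ)..t, psiQInv q (c v - Gf g u v s)) + H0 v := fun v t => rfl
  constructor
  · -- continuity
    intro v ε hε
    set R := ‖v‖ + 1 with hRdef
    have hvR : ‖v‖ ≤ R := by rw [hRdef]; linarith
    obtain ⟨K, hK0, hK⟩ := g_bound hg hucont R
    obtain ⟨δc1, hδc10, Hc1⟩ := c_close hq hg hucont hh₀ hh₁ hA₀ hA₁ hcPhi v one_pos
    set Rψ := |c v| + 1 + K with hRψdef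
    obtain ⟨δψ, hδψ0, Hψ⟩ := unif_cont (continuous_psiQInv hq) Rψ (show 0 < ε/2 by linarith)
    obtain ⟨δc, hδc0, Hc⟩ := c_close hq hg hucont hh₀ hh₁ hA₀ hA₁ hcPhi v
      (show 0 < δψ/2 by linarith)
    obtain ⟨δG, hδG0, HG⟩ := Gf_close hg hucont R (show 0 < δψ/2 by linarith)
    obtain ⟨δ₀, hδ₀0, H₀c⟩ := rs_close hh₀ hA₀ R (show 0 < ε/2 by linarith)
    refine ⟨min (min 1 δc1) (min δc (min δG δ₀)), by positivity, fun v' hd t ht => ?_⟩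
    have hd1 : dist v' v ≤ 1 := le_trans hd (le_trans (min_le_left _ _) (min_le_left _ _))
    have hdc1 : dist v' v ≤ δc1 := le_trans hd (le_trans (min_le_left _ _) (min_le_right _ _))
    have hdc : dist v' v ≤ δc := le_trans hd (le_trans (min_le_right _ _) (min_le_left _ _))
    have hdG : dist v' v ≤ δG := le_trans hd (le_trans (min_le_right _ _)
      (le_trans (min_le_right _ _) (min_le_left _ _)))
    have hd₀ : dist v' v ≤ δ₀ := le_trans hd (le_trans (min_le_right _ _)
      (le_trans (min_le_right _ _) (min_le_right _ _)))
    have hv'R : ‖v'‖ ≤ R := by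
      have h2 := norm_sub_norm_le v' v
      rw [← dist_eq_norm] at h2
      rw [hRdef]; linarith
    obtain ⟨I₁, hH0v, -, -⟩ := hc v
    obtain ⟨I₁', hH0v', -, -⟩ := hc v'
    have hH0d : |H0 v' - H0 v| ≤ ε/2 := H₀c v v' hvR hv'R hd₀ _ _ hH0v hH0v'
    have hcd : |c v' - c v| ≤ δψ/2 := Hc v' hdc
    have hcd1 : |c v' - c v| ≤ 1 := Hc1 v' hdc1
    have hGd := HG v v' hvR hv'R hdG
    have hGbv : ∀ s ∈ Set.Icc (0:ℝ) 1, |Gf g u v s| ≤ K :=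
      fun s hs => Gf_bound hg hucont hK v hvR hs
    have hGbv' : ∀ s ∈ Set.Icc (0:ℝ) 1, |Gf g u v' s| ≤ K :=
      fun s hs => Gf_bound hg hucont hK v' hv'R hs
    have hint : |(∫ s in (0:ℝ)..t, psiQInv q (c v' - Gf g u v' s))
        - ∫ s in (0:ℝ)..t, psiQInv q (c v - Gf g u v s)| ≤ ε/2 := by
      apply integral_diff_bound ht (by linarith)
        (outer_intble hq hg hucont v' (c v') ht) (outer_intble hq hg hucont v (c v) ht)
      intro s hs
      have h1 := abs_le.1 (hGbv s hs)
      have h2 := abs_le.1 (hGbv' s hs)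
      have h3 := abs_le.1 hcd1
      have h4 := abs_le.1 hcd
      have h5 := abs_le.1 (hGd s hs)
      have hcv := le_abs_self (c v)
      have hcv' := neg_abs_le (c v)
      apply Hψ
      · rw [hRψdef, abs_le]; constructor <;> linarith
      · rw [hRψdef, abs_le]; constructor <;> linarith
      · rw [abs_le]; constructor <;> linarith
    rw [hTfun, hTfun]
    have heq : (∫ s in (0:ℝ)..t, psiQInv q (c v' - Gf g u v' s)) + H0 v'
        - ((∫ s in (0:ℝ)..t, psiQInv q (c v - Gf g u v s)) + H0 v)
        = ((∫ s in (0:ℝ)..t, psiQInv q (c v' - Gf g u v' s))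
          - ∫ s in (0:ℝ)..t, psiQInv q (c v - Gf g u v s)) + (H0 v' - H0 v) := by ring
    rw [heq]
    calc |((∫ s in (0:ℝ)..t, psiQInv q (c v' - Gf g u v' s))
          - ∫ s in (0:ℝ)..t, psiQInv q (c v - Gf g u v s)) + (H0 v' - H0 v)|
        ≤ |(∫ s in (0:ℝ)..t, psiQInv q (c v' - Gf g u v' s))
          - ∫ s in (0:ℝ)..t, psiQInv q (c v - Gf g u v s)| + |H0 v' - H0 v| := abs_add_le _ _
      _ ≤ ε/2 + ε/2 := add_le_add hint hH0d
      _ = ε := by ring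
  · -- compactness
    intro v hM
    obtain ⟨M, hM⟩ := hM
    set R := max M 0 with hRdef
    have hvR : ∀ n, ‖v n‖ ≤ R := fun n => le_trans (hM n) (le_max_left _ _)
    obtain ⟨K, hK0, hK⟩ := g_bound hg hucont R
    obtain ⟨B, hB0, hB⟩ := c_bound hq hg hucont hh₀ hh₁ hA₀ hA₁ hcPhi R
    obtain ⟨L, hL0, hL⟩ := cont_bound (continuous_psiQInv hq) (B + K)
    obtain ⟨S₀, hS₀0, hS₀⟩ := cont_bound hh₀ R
    set V₀ := (eVariationOn A₀ (Set.Icc 0 1)).toReal with hV₀def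
    have hV₀0 : 0 ≤ V₀ := ENNReal.toReal_nonneg
    set C₀ := S₀ * V₀ with hC₀def
    have hC₀0 : 0 ≤ C₀ := mul_nonneg hS₀0 hV₀0
    set Cb := L + C₀ with hCbdef
    have hψb : ∀ n, ∀ s ∈ Set.Icc (0:ℝ) 1, |psiQInv q (c (v n) - Gf g u (v n) s)| ≤ L := by
      intro n s hs
      apply hL
      have h1 := abs_le.1 (hB (v n) (hvR n))
      have h2 := abs_le.1 (Gf_bound hg hucont hK (v n) (hvR n) hs)
      rw [abs_le]; constructor <;> linarith
    have hH0b : ∀ n, |H0 (v n)| ≤ C₀ := by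
      intro n
      obtain ⟨I₁, hH0n, -, -⟩ := hc (v n)
      exact rs_abs_bound hA₀ hH0n hS₀0 (fun s _ => hS₀ _ (le_trans (extC_abs_le _ s) (hvR n)))
    have hintn : ∀ n, ∀ t ∈ Set.Icc (0:ℝ) 1,
        IntervalIntegrable (fun s => psiQInv q (c (v n) - Gf g u (v n) s)) volume 0 t :=
      fun n t ht => outer_intble hq hg hucont (v n) _ ht
    have hlip : ∀ n, ∀ t ∈ Set.Icc (0:ℝ) 1, ∀ t' ∈ Set.Icc (0:ℝ) 1,
        |Tfun q g u c H0 (v n) t - Tfun q g u c H0 (v n) t'| ≤ L * |t - t'| := by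
      intro n t ht t' ht'
      rw [hTfun, hTfun]
      have hsub : ((∫ s in (0:ℝ)..t, psiQInv q (c (v n) - Gf g u (v n) s)) + H0 (v n))
          - ((∫ s in (0:ℝ)..t', psiQInv q (c (v n) - Gf g u (v n) s)) + H0 (v n))
          = ∫ s in t'..t, psiQInv q (c (v n) - Gf g u (v n) s) := by
        rw [← intervalIntegral.integral_interval_sub_left (hintn n t ht) (hintn n t' ht')]
        ring
      rw [hsub]
      have h := intervalIntegral.norm_integral_le_of_norm_le_const
        (f := fun s => psiQInv q (c (v n) - Gf g u (v n) s)) (a := t') (b := t) (C := L) ?_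
      · rwa [Real.norm_eq_abs] at h
      · intro x hx
        rw [Real.norm_eq_abs]
        apply hψb n
        exact ⟨le_trans (le_min ht'.1 ht.1) hx.1.le, le_trans hx.2 (max_le ht'.2 ht.2)⟩
    have hbnd : ∀ n, ∀ t ∈ Set.Icc (0:ℝ) 1, |Tfun q g u c H0 (v n) t| ≤ Cb := by
      intro n t ht
      rw [hTfun]
      have h := intervalIntegral.norm_integral_le_of_norm_le_const
        (f := fun s => psiQInv q (c (v n) - Gf g u (v n) s)) (a := 0) (b := t) (C := L)
        (fun x hx => by
          rw [Real.norm_eq_abs]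
          apply hψb n
          rw [Set.uIoc_of_le ht.1] at hx
          exact ⟨hx.1.le, le_trans hx.2 ht.2⟩)
      rw [Real.norm_eq_abs] at h
      have h1 : |t - 0| ≤ 1 := by rw [sub_zero, abs_of_nonneg ht.1]; exact ht.2
      calc |(∫ s in (0:ℝ)..t, psiQInv q (c (v n) - Gf g u (v n) s)) + H0 (v n)|
          ≤ |∫ s in (0:ℝ)..t, psiQInv q (c (v n) - Gf g u (v n) s)| + |H0 (v n)| := abs_add_le _ _
        _ ≤ L + C₀ := add_le_add (le_trans h (by nlinarith)) (hH0b n)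
    have hcontn : ∀ n, Continuous fun x : Set.Icc (0:ℝ) 1 => Tfun q g u c H0 (v n) x.1 := by
      intro n
      rw [Metric.continuous_iff]
      intro x ε hε
      refine ⟨ε/(L+1), by positivity, fun y hy => ?_⟩
      rw [Subtype.dist_eq, Real.dist_eq] at hy
      rw [Real.dist_eq]
      have h := hlip n y.1 y.2 x.1 x.2
      have hfs : (L+1) * (ε/(L+1)) = ε := by field_simp
      nlinarith [abs_nonneg ((y:ℝ) - (x:ℝ))]
    set F : ℕ → (BoundedContinuousFunction (Set.Icc (0:ℝ) 1) ℝ) := fun n =>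
      BoundedContinuousFunction.mkOfCompact ⟨fun x => Tfun q g u c H0 (v n) x.1, hcontn n⟩ with hFdef
    have hFapp : ∀ (n : ℕ) (x : Set.Icc (0:ℝ) 1), F n x = Tfun q g u c H0 (v n) x.1 :=
      fun n x => rfl
    have hin : ∀ (f : BoundedContinuousFunction (Set.Icc (0:ℝ) 1) ℝ) (x : Set.Icc (0:ℝ) 1),
        f ∈ Set.range F → f x ∈ Set.Icc (-Cb) Cb := by
      rintro f x ⟨n, rfl⟩
      rw [hFapp]
      exact abs_le.1 (hbnd n x.1 x.2)
    have hequi : Equicontinuous ((↑) : Set.range F → (Set.Icc (0:ℝ) 1) → ℝ) := by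
      intro x
      rw [Metric.equicontinuousAt_iff]
      intro ε hε
      refine ⟨ε/(L+1), by positivity, fun y hy f => ?_⟩
      obtain ⟨f, n, rfl⟩ := f
      show dist (F n x) (F n y) < ε
      rw [hFapp, hFapp, Real.dist_eq]
      rw [Subtype.dist_eq, Real.dist_eq] at hy
      have h := hlip n x.1 x.2 y.1 y.2
      have hy' : |(x:ℝ) - (y:ℝ)| < ε/(L+1) := by rwa [abs_sub_comm]
      have hfs : (L+1) * (ε/(L+1)) = ε := by field_simp
      nlinarith [abs_nonneg ((x:ℝ) - (y:ℝ))]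
    have hcpt := BoundedContinuousFunction.arzela_ascoli (Set.Icc (-Cb) Cb) isCompact_Icc
      (Set.range F) hin hequi
    obtain ⟨a, -, σ, hσ, hconv⟩ :=
      hcpt.isSeqCompact (fun n => subset_closure (Set.mem_range_self n))
    refine ⟨σ, fun t => a (Set.projIcc 0 1 (by norm_num) t), hσ, ?_⟩
    rw [Metric.tendstoUniformlyOn_iff]
    intro ε hε
    have hev := Metric.tendsto_nhds.1 hconv ε hε
    filter_upwards [hev] with k hk t ht
    have hproj : Set.projIcc 0 1 (by norm_num : (0:ℝ) ≤ 1) t = ⟨t, ht⟩ :=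
      Set.projIcc_of_mem _ ht
    calc dist (a (Set.projIcc 0 1 (by norm_num) t)) (Tfun q g u c H0 (v (σ k)) t)
        = dist (a ⟨t, ht⟩) (F (σ k) ⟨t, ht⟩) := by rw [hproj]; rfl
      _ ≤ dist a (F (σ k)) := BoundedContinuousFunction.dist_coe_le_dist _
      _ = dist (F (σ k)) a := dist_comm _ _
      _ < ε := hk

end
end
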